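/- arXiv:1206.0996 — 3 statements merged into one kernel-verified Lean document; each statement's English description precedes it below -/
import Mathlib

section
/- Let A be an alternative ring. If x is quasiregular with quasiinverse a, and y is quasiregular with quasiinverse b, then (x ∘ y) ∘ b = x and a ∘ (x ∘ y) = y. Together with closure under ∘ and the fact that 0 is a two-sided identity for ∘, this shows the quasiregular elements of A form a loop under the circle operation. -/
/-!
In an alternative ring the associator `(x, y, z) = (x * y) * z - x * (y * z)` is alternating,
and two instances of Teichmüller's identity (`associator_cocycle`) give
`(x, y, y * z) = (x, y, z) * y` and `(x, y, z * y) = y * (x, y, z)`.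
If `p ∘ q = 0`, i.e. `p * q = p + q`, these make `a = (w, p, q)` satisfy `a * p = a = q * a`;
then `(q, a, p) = 0` while `(a, p, q) = -a`, so `a = 0`. Thus a pair with `p ∘ q = 0`
associates with everything under `∘`, which gives `(z ∘ p) ∘ q = z` and `p ∘ (q ∘ z) = z`,
hence both divisions. Closure of the quasiregular elements under `∘` comes from the middle
Moufang identity, transported to `∘`: it yields `(u ∘ v) ∘ (v' ∘ u') = 0`.
-/

/-- The circle operation `x ∘ y = x + y - x * y` on a
(not necessarily associative or unital) ring. -/
def circ {A : Type*} [NonUnitalNonAssocRing A] (x y : A) : A := x + y - x * y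

/-- `b` is a quasiinverse of `a`: `a + b - a*b = 0` and `a + b - b*a = 0`. -/
def IsQuasiinv {A : Type*} [NonUnitalNonAssocRing A] (a b : A) : Prop :=
  a + b - a * b = 0 ∧ a + b - b * a = 0

/-- `a` is quasiregular: it has a quasiinverse. -/
def IsQuasireg {A : Type*} [NonUnitalNonAssocRing A] (a : A) : Prop :=
  ∃ b, IsQuasiinv a b

class IsAlternative (A : Type*) [NonUnitalNonAssocRing A] : Prop where
  left_alternative : ∀ x y : A, x * (x * y) = x * x * y
  right_alternative : ∀ x y : A, y * x * x = y * (x * x)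

section

variable {A : Type*} [NonUnitalNonAssocRing A]

theorem associator_add_left (x x' y z : A) :
    associator (x + x') y z = associator x y z + associator x' y z := by
  simp only [associator, add_mul]; abel

theorem associator_add_mid (x y y' z : A) :
    associator x (y + y') z = associator x y z + associator x y' z := by
  simp only [associator, add_mul, mul_add]; abel

theorem associator_add_right (x y z z' : A) :
    associator x y (z + z') = associator x y z + associator x y z' := by
  simp only [associator, mul_add]; abel

theorem circ_eq_zero_iff {p q : A} : circ p q = 0 ↔ p * q = p + q := by
  rw [circ, sub_eq_zero, eq_comm]

theorem isQuasiinv_iff {a b : A} : IsQuasiinv a b ↔ circ a b = 0 ∧ circ b a = 0 := by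
  rw [IsQuasiinv, circ, circ, add_comm b a]

theorem IsQuasiinv.symm {a b : A} (h : IsQuasiinv a b) : IsQuasiinv b a :=
  isQuasiinv_iff.2 (isQuasiinv_iff.1 h).symm

theorem zero_circ (x : A) : circ 0 x = x := by simp [circ]

theorem circ_zero (x : A) : circ x 0 = x := by simp [circ]

theorem circ_assoc_of_associator_eq_zero {x y z : A} (h : associator x y z = 0) :
    circ (circ x y) z = circ x (circ y z) := by
  rw [associator, sub_eq_zero] at h
  simp only [circ, mul_sub, sub_mul, mul_add, add_mul, h]
  abel

variable [IsAlternative A]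

theorem associator_self_left (x y : A) : associator x x y = 0 := by
  rw [associator, IsAlternative.left_alternative, sub_self]

theorem associator_self_right (x y : A) : associator y x x = 0 := by
  rw [associator, IsAlternative.right_alternative, sub_self]

theorem associator_swap_left (x y z : A) : associator y x z = -associator x y z := by
  have h := associator_self_left (x + y) z
  rw [associator_add_left, associator_add_mid, associator_add_mid, associator_self_left,
    associator_self_left, zero_add, add_zero] at h
  exact eq_neg_of_add_eq_zero_right h

theorem associator_swap_right (x y z : A) : associator x z y = -associator x y z := by
  have h := associator_self_right (y + z) x
  rw [associator_add_mid, associator_add_right, associator_add_right, associator_self_right,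
    associator_self_right, zero_add, add_zero] at h
  exact eq_neg_of_add_eq_zero_right h

theorem associator_rotate (x y z : A) : associator y z x = associator x y z := by
  rw [associator_swap_right, associator_swap_left, neg_neg]

theorem associator_self_mid (x y : A) : associator x y x = 0 := by
  rw [associator_swap_left, associator_self_right, neg_zero]

theorem associator_self_mul (x y z : A) : associator x y (y * z) = associator x y z * y := by
  have h₁ := associator_cocycle x y y z
  have h₂ := associator_cocycle z x y y
  simp only [associator_self_left, associator_self_right, mul_zero, zero_mul] at h₁ h₂
  rw [associator_rotate z (x * y) y, associator_rotate z x (y * y)] at h₁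
  rw [associator_rotate y z x, associator_rotate x y z] at h₂
  linear_combination (norm := abel) -h₁ - h₂

theorem associator_mul_self (x y z : A) : associator x y (z * y) = y * associator x y z := by
  have h₁ := associator_cocycle z y y x
  have h₂ := associator_cocycle y y x z
  simp only [associator_self_left, associator_self_right, mul_zero, zero_mul] at h₁ h₂
  rw [associator_rotate x (z * y) y, associator_swap_right x y (z * y)] at h₁
  rw [associator_rotate z (y * y) x, associator_rotate z y (y * x), associator_swap_left x y z,
    mul_neg] at h₂
  linear_combination (norm := abel) h₁ + h₂

theorem middle_moufang (x y z : A) : x * y * (z * x) = x * (y * z * x) := by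
  have h : associator (x * y) z x = associator x y z * x := by
    rw [← associator_rotate (x * y) z x, associator_self_mul, associator_rotate y z x,
      associator_rotate x y z]
  have hf := associator_self_mid x (y * z)
  linear_combination (norm := (simp only [associator, sub_mul]; abel)) hf - h

theorem associator_eq_zero_of_mul_eq_add {p q : A} (h : p * q = p + q) (w : A) :
    associator w p q = 0 := by
  set a := associator w p q with ha
  have hap : a * p = a := by
    rw [ha, ← associator_self_mul, h, associator_add_right, associator_self_right, zero_add]
  have hqa : q * a = a := by
    have := associator_mul_self w q p
    rw [h, associator_add_right, associator_self_right, add_zero, associator_swap_right,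
      mul_neg, neg_inj] at this
    exact this.symm
  have h₁ : associator q a p = 0 := by rw [associator, hqa, hap, hqa, sub_self]
  have h₂ : associator a p q = -a := by rw [associator, hap, h, mul_add, hap]; abel
  rwa [associator_rotate p q a, associator_rotate a p q, h₂, neg_eq_zero] at h₁

theorem circ_circ_cancel_right {p q : A} (h : circ p q = 0) (z : A) : circ (circ z p) q = z := by
  rw [circ_assoc_of_associator_eq_zero
    (associator_eq_zero_of_mul_eq_add (circ_eq_zero_iff.1 h) z), h, circ_zero]

theorem circ_circ_cancel_left {p q : A} (h : circ p q = 0) (z : A) : circ p (circ q z) = z := by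
  have hpqz : associator p q z = 0 :=
    (associator_rotate z p q).trans (associator_eq_zero_of_mul_eq_add (circ_eq_zero_iff.1 h) z)
  rw [← circ_assoc_of_associator_eq_zero hpqz, h, zero_circ]

theorem circ_self_circ (x y : A) : circ x (circ x y) = circ (circ x x) y :=
  (circ_assoc_of_associator_eq_zero (associator_self_left x y)).symm

theorem circ_middle_moufang (x y z : A) :
    circ (circ x y) (circ z x) = circ x (circ (circ y z) x) := by
  have hm := middle_moufang x y z
  have hf := associator_self_mid x y
  have hc := associator_rotate x y z
  simp only [associator] at hf hc
  simp only [circ, mul_sub, sub_mul, mul_add, add_mul]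
  -- the cubic terms cancel by flexibility and cyclicity of the associator
  linear_combination (norm := abel) hf - hc - hm

theorem circ_circ_circ_rev_eq_zero {u u' v v' : A} (hu : circ u u' = 0) (hu' : circ u' u = 0)
    (hv : circ v v' = 0) : circ (circ u v) (circ v' u') = 0 :=
  calc circ (circ u v) (circ v' u')
      = circ (circ u' (circ u (circ u v))) (circ v' u') := by rw [circ_circ_cancel_left hu']
    _ = circ u' (circ (circ (circ (circ u u) v) v') u') := by
        rw [circ_middle_moufang, circ_self_circ]
    _ = 0 := by rw [circ_circ_cancel_right hv, ← circ_self_circ, hu, circ_zero, hu']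

theorem IsQuasiinv.circ {u u' v v' : A} (hu : IsQuasiinv u u') (hv : IsQuasiinv v v') :
    IsQuasiinv (circ u v) (circ v' u') := by
  rw [isQuasiinv_iff] at hu hv ⊢
  exact ⟨circ_circ_circ_rev_eq_zero hu.1 hu.2 hv.1, circ_circ_circ_rev_eq_zero hv.2 hv.1 hu.2⟩

theorem IsQuasireg.circ {u v : A} : IsQuasireg u → IsQuasireg v → IsQuasireg (circ u v)
  | ⟨_, hu⟩, ⟨_, hv⟩ => ⟨_, hu.circ hv⟩

end

/-- In an alternative ring, if `x` is quasiregular with quasiinverse `a`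
and `y` is quasiregular with quasiinverse `b`, then `(x ∘ y) ∘ b = x` and
`a ∘ (x ∘ y) = y`.  Together with closure of the quasiregular elements under `∘` and
the fact that `0` is a two-sided identity for `∘`, this shows that the quasiregular
elements of `A` form a loop under the circle operation. -/
theorem circ_div {A : Type*} [NonUnitalNonAssocRing A]
    (altl : ∀ x y : A, x * (x * y) = (x * x) * y)
    (altr : ∀ x y : A, (y * x) * x = y * (x * x))
    (x a y b : A) (hxa : IsQuasiinv x a) (hyb : IsQuasiinv y b) :
    circ (circ x y) b = x ∧ circ a (circ x y) = y ∧
      (∀ z : A, circ 0 z = z ∧ circ z 0 = z) ∧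
      (∀ u v : A, IsQuasireg u → IsQuasireg v → IsQuasireg (circ u v)) ∧
      (∀ u v : A, IsQuasireg u → IsQuasireg v →
        (∃! w : A, IsQuasireg w ∧ circ u w = v) ∧
        (∃! w : A, IsQuasireg w ∧ circ w u = v)) := by
  have : IsAlternative A := ⟨altl, altr⟩
  rw [isQuasiinv_iff] at hxa hyb
  refine ⟨circ_circ_cancel_right hyb.1 x, circ_circ_cancel_left hxa.2 y,
    fun z => ⟨zero_circ z, circ_zero z⟩, fun _ _ => IsQuasireg.circ, ?_⟩
  rintro u v ⟨u', hu⟩ hv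
  have hu' : IsQuasireg u' := ⟨u, hu.symm⟩
  rw [isQuasiinv_iff] at hu
  refine ⟨⟨circ u' v, ⟨hu'.circ hv, circ_circ_cancel_left hu.1 v⟩, ?_⟩,
    ⟨circ v u', ⟨hv.circ hu', circ_circ_cancel_right hu.2 v⟩, ?_⟩⟩
  · rintro w ⟨-, rfl⟩
    exact (circ_circ_cancel_left hu.2 w).symm
  · rintro w ⟨-, rfl⟩
    exact (circ_circ_cancel_right hu.1 w).symm
end

section
/- Let A be a (not necessarily associative or unital) ring and let {I_s}_{s ∈ S} be a family of two-sided ideals of A, each of which is simple as an ideal of A (that is, I_s ≠ 0 and the only two-sided ideals of A contained in I_s are 0 and I_s). If A = Σ_{s ∈ S} I_s, i.e. every element of A is a finite sum of elements of the ideals I_s, then there is a subset T ⊆ S such that A is the internal direct sum of the family {I_t}_{t ∈ T}: A = Σ_{t ∈ T} I_t and I_t ∩ Σ_{t ≠ t' ∈ T} I_{t'} = 0 for every t ∈ T. -/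
/-!
Two-sided ideals form a modular lattice in which the simple ideals are the atoms, and an atom is
compact: if it lies below the supremum of a directed family of ideals, a nonzero element of it lies
in some member, which the atom then meets nontrivially and so is contained in. In a modular lattice,
a family of compact atoms has a maximal independent subfamily by Zorn's lemma, compactness being
what lets independence pass to unions of chains. An atom of the family not below the supremum of a
maximal subfamily would be disjoint from it and could be added, so the subfamily has the same
supremum.
-/

def TwoSidedIdeal.IsSimpleIdeal {A : Type*} [NonUnitalNonAssocRing A]
    (I : TwoSidedIdeal A) : Prop :=
  I ≠ ⊥ ∧ ∀ J : TwoSidedIdeal A, J ≤ I → J = ⊥ ∨ J = I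

open Set

section Lattice

variable {α ι : Type*} [CompleteLattice α]

def iSupIndepOn (f : ι → α) (T : Set ι) : Prop :=
  ∀ t ∈ T, Disjoint (f t) (⨆ t' ∈ T \ {t}, f t')

theorem iSupIndepOn.insert [IsModularLattice α] {f : ι → α} {T : Set ι} {i : ι}
    (hT : iSupIndepOn f T) (hi : i ∉ T) (hdisj : Disjoint (f i) (⨆ t ∈ T, f t)) :
    iSupIndepOn f (insert i T) := by
  rintro t (rfl | ht)
  · rwa [insert_sdiff_self_of_notMem hi]
  · have hit : i ∉ ({t} : Set ι) := fun h => hi (h ▸ ht)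
    rw [insert_sdiff_of_notMem _ hit, iSup_insert, sup_comm]
    refine (hT t ht).disjoint_sup_right_of_disjoint_sup_left (hdisj.symm.mono_left ?_)
    exact sup_le (le_biSup f ht) (biSup_mono fun _ h => h.1)

theorem IsCompactElement.exists_le_of_le_iSup_of_directed {k : α} (hk : IsCompactElement k)
    {κ : Type*} [Nonempty κ] {g : κ → α} (hg : Directed (· ≤ ·) g) (h : k ≤ ⨆ j, g j) :
    ∃ j, k ≤ g j := by
  obtain ⟨-, ⟨j, rfl⟩, hj⟩ := (CompleteLattice.isCompactElement_iff_le_of_directed_sSup_le _ k).1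
    hk (range g) (range_nonempty g) hg.directedOn_range h
  exact ⟨j, hj⟩

theorem iSupIndepOn_sUnion_of_directedOn {f : ι → α} (hatom : ∀ i, IsAtom (f i))
    (hcompact : ∀ i, IsCompactElement (f i)) {c : Set (Set ι)} (hc : DirectedOn (· ⊆ ·) c)
    (hindep : ∀ T ∈ c, iSupIndepOn f T) : iSupIndepOn f (⋃₀ c) := by
  rintro t ⟨T₀, hT₀, htT₀⟩
  rw [← (hatom t).not_le_iff_disjoint]
  intro hle
  have : Nonempty c := ⟨⟨T₀, hT₀⟩⟩
  have hdir : Directed (· ≤ ·) fun T : c => ⨆ t' ∈ (T : Set ι) \ {t}, f t' :=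
    hc.directed_val.mono_comp _ (g := fun T : Set ι => ⨆ t' ∈ T \ {t}, f t')
      fun _ _ h => biSup_mono fun _ => And.imp_left (@h _)
  rw [sUnion_eq_iUnion, iUnion_sdiff, iSup_iUnion] at hle
  obtain ⟨T₁, hT₁⟩ := (hcompact t).exists_le_of_le_iSup_of_directed hdir hle
  obtain ⟨T, hT, hT₀T, hT₁T⟩ := hc T₀ hT₀ T₁ T₁.2
  exact (hatom t).not_le_iff_disjoint.2 (hindep T hT t (hT₀T htT₀))
    (hT₁.trans (biSup_mono fun _ hx => ⟨hT₁T hx.1, hx.2⟩))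

theorem exists_iSupIndepOn_biSup_eq_iSup [IsModularLattice α] (f : ι → α)
    (hatom : ∀ i, IsAtom (f i)) (hcompact : ∀ i, IsCompactElement (f i)) :
    ∃ T : Set ι, iSupIndepOn f T ∧ ⨆ t ∈ T, f t = ⨆ i, f i := by
  obtain ⟨T, hT⟩ := zorn_subset {T | iSupIndepOn f T} fun c hc hchain =>
    ⟨⋃₀ c, iSupIndepOn_sUnion_of_directedOn hatom hcompact hchain.directedOn hc,
      fun _ => subset_sUnion_of_mem⟩
  refine ⟨T, hT.1, le_antisymm (iSup₂_le fun i _ => le_iSup f i) (iSup_le fun i => ?_)⟩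
  by_contra hi
  have hiT : i ∉ T := fun h => hi (le_biSup f h)
  exact hiT <| hT.2 (hT.1.insert hiT ((hatom i).not_le_iff_disjoint.1 hi))
    (subset_insert i T) (mem_insert i T)

end Lattice

namespace TwoSidedIdeal

variable {A : Type*} [NonUnitalNonAssocRing A]

instance : IsModularLattice (TwoSidedIdeal A) where
  sup_inf_le_assoc_of_le {I} J K hIK a ha := by
    obtain ⟨huvIJ, huvK⟩ := (mem_inf A).1 ha
    obtain ⟨u, hu, v, hv, rfl⟩ := mem_sup.1 huvIJ
    refine mem_sup.2 ⟨u, hu, v, (mem_inf A).2 ⟨hv, ?_⟩, rfl⟩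
    simpa using K.sub_mem huvK (hIK hu)

theorem exists_mem_ne_zero_of_ne_bot {I : TwoSidedIdeal A} (h : I ≠ ⊥) : ∃ x ∈ I, x ≠ 0 := by
  by_contra! h0
  exact h (eq_bot_iff.2 fun x hx => (mem_bot A).2 (h0 x hx))

theorem mem_sSup_of_directedOn {d : Set (TwoSidedIdeal A)} (hne : d.Nonempty)
    (hd : DirectedOn (· ≤ ·) d) {x : A} (hx : x ∈ sSup d) : ∃ J ∈ d, x ∈ J := by
  let U : TwoSidedIdeal A := .mk' {x | ∃ J ∈ d, x ∈ J}
    (let ⟨J, hJ⟩ := hne; ⟨J, hJ, J.zero_mem⟩)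
    (fun ⟨J, hJ, ha⟩ ⟨K, hK, hb⟩ =>
      let ⟨L, hL, hJL, hKL⟩ := hd J hJ K hK; ⟨L, hL, L.add_mem (hJL ha) (hKL hb)⟩)
    (fun ⟨J, hJ, ha⟩ => ⟨J, hJ, J.neg_mem ha⟩)
    (fun ⟨J, hJ, hb⟩ => ⟨J, hJ, J.mul_mem_left _ _ hb⟩)
    (fun ⟨J, hJ, ha⟩ => ⟨J, hJ, J.mul_mem_right _ _ ha⟩)
  have hU : ∀ y, y ∈ U ↔ ∃ J ∈ d, y ∈ J := mem_mk' _ _ _ _ _ _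
  exact (hU x).1 (sSup_le (fun J hJ y hy => (hU y).2 ⟨J, hJ, hy⟩) hx)

theorem isCompactElement_of_isAtom {J : TwoSidedIdeal A} (hJ : IsAtom J) :
    IsCompactElement J := by
  rw [CompleteLattice.isCompactElement_iff_le_of_directed_sSup_le]
  intro d hne hd hle
  obtain ⟨x, hxJ, hx0⟩ := exists_mem_ne_zero_of_ne_bot hJ.1
  obtain ⟨K, hK, hxK⟩ := mem_sSup_of_directedOn hne hd (hle hxJ)
  refine ⟨K, hK, hJ.not_disjoint_iff_le.1 fun hJK => hx0 ?_⟩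
  exact (mem_bot A).1 (hJK.le_bot ((mem_inf A).2 ⟨hxJ, hxK⟩))

theorem IsSimpleIdeal.isAtom {I : TwoSidedIdeal A} (h : I.IsSimpleIdeal) : IsAtom I :=
  ⟨h.1, fun J hJ => (h.2 J hJ.le).resolve_right hJ.ne⟩

end TwoSidedIdeal

open TwoSidedIdeal in
/-- **Lemma 5.2.**  Let `A` be a (not necessarily associative or unital)
ring and `{I_s}` a family of two-sided ideals of `A`, each simple as an ideal of `A`.
If `A` is the sum of the `I_s`, then there is a subset `T ⊆ S` such that `A` is the
internal direct sum of the family `{I_t}_{t ∈ T}`. -/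
theorem sum_simple_ideals_direct {A : Type*} [NonUnitalNonAssocRing A] {S : Type*}
    (I : S → TwoSidedIdeal A)
    (hsimple : ∀ s : S, (I s).IsSimpleIdeal)
    (hsum : (⨆ s : S, I s) = ⊤) :
    ∃ T : Set S, (⨆ t ∈ T, I t) = ⊤ ∧
      ∀ t ∈ T, (I t) ⊓ (⨆ t' ∈ {t' : S | t' ∈ T ∧ t' ≠ t}, I t') = ⊥ := by
  have hatom : ∀ s, IsAtom (I s) := fun s => (hsimple s).isAtom
  obtain ⟨T, hT, hsup⟩ :=
    exists_iSupIndepOn_biSup_eq_iSup I hatom fun s => isCompactElement_of_isAtom (hatom s)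
  exact ⟨T, hsup.trans hsum, fun t ht => disjoint_iff.1 (hT t ht)⟩
end

section
/- Let A be a unital alternative ring, let m ≥ 1, and let u, v, w ∈ A satisfy u^m = v^m = w^m = 0, where powers are defined by x^0 = 1 and x^{i+1} = x·x^i. Put S(x) = 1 + x + ⋯ + x^{m−1}, a = 1 − u, b = 1 − v, c = 1 − w, and write (x, y, z) = (xy)z − x(yz) for the associator. Then (ab)c = (a(bc))·(1 − ((S(w)S(v))S(u))·(u, v, w)), i.e. the loop associator of a, b, c in the loop of invertible elements equals 1 − ((S(w)S(v))S(u))(u, v, w); and ab = (ba)·(1 + (S(u)S(v))·(uv − vu)), i.e. the loop commutator of a, b equals 1 + (S(u)S(v))(uv − vu). -/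
/-- Powers in a unital (not necessarily associative) ring: `x^0 = 1`,
`x^(i+1) = x * x^i`. -/
def npowNA {A : Type*} [NonAssocRing A] (x : A) : ℕ → A
  | 0 => 1
  | n + 1 => x * npowNA x n

/-- The partial geometric sum `S(x) = 1 + x + ⋯ + x^(m-1)`. -/
def geomS {A : Type*} [NonAssocRing A] (m : ℕ) (x : A) : A :=
  ∑ i ∈ Finset.range m, npowNA x i

/-- The associator `(x, y, z) = (xy)z - x(yz)`. -/
def assocNA {A : Type*} [NonAssocRing A] (x y z : A) : A := x * y * z - x * (y * z)

/-!
In the alternative ring `A` the associator is alternating, and the Teichmüller identity turns this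
into the Moufang identities. These give the inverse properties `y(xz) = z = (zx)y` whenever `y` is a
two-sided inverse of `x`, and the rule `(pq)⁻¹ = q⁻¹p⁻¹`. Since `S(x)` is a two-sided inverse of
`1 - x` when `x` is nilpotent, `a(bc)` and `ba` have the inverses `(S(w)S(v))S(u)` and `S(u)S(v)`.
Both identities then follow from `(ab)c - a(bc) = -(u, v, w)` and `ab - ba = uv - vu` by cancelling
`a(bc)`, resp. `ba`, against its inverse on the left.
-/

structure IsAlternative_s12 (A : Type*) [NonAssocRing A] : Prop where
  left : ∀ x y : A, x * (x * y) = (x * x) * y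
  right : ∀ x y : A, (y * x) * x = y * (x * x)

section NonAssocRing

variable {A : Type*} [NonAssocRing A]

theorem assocNA_teichmuller (a b c d : A) :
    assocNA (a * b) c d - assocNA a (b * c) d + assocNA a b (c * d)
      = a * assocNA b c d + assocNA a b c * d := by
  simp only [assocNA, mul_sub, sub_mul]
  abel

theorem assocNA_one_sub_one_sub_one_sub (u v w : A) :
    assocNA (1 - u) (1 - v) (1 - w) = -assocNA u v w := by
  simp only [assocNA, mul_sub, sub_mul, mul_one, one_mul]
  abel

theorem one_sub_mul_geomS (m : ℕ) (x : A) : (1 - x) * geomS m x = 1 - npowNA x m := by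
  rw [geomS, sub_mul, one_mul, Finset.mul_sum, ← Finset.sum_sub_distrib]
  exact Finset.sum_range_sub' (npowNA x) m

end NonAssocRing

namespace IsAlternative_s12

variable {A : Type*} [NonAssocRing A] (hA : IsAlternative_s12 A)
include hA

theorem op : IsAlternative_s12 Aᵐᵒᵖ where
  left x y := MulOpposite.unop_injective (hA.right x.unop y.unop)
  right x y := MulOpposite.unop_injective (hA.left x.unop y.unop)

theorem assocNA_self_left (x y : A) : assocNA x x y = 0 := by
  rw [assocNA, hA.left, sub_self]

theorem assocNA_self_right (x y : A) : assocNA x y y = 0 := by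
  rw [assocNA, hA.right, sub_self]

theorem assocNA_swap_left (x y z : A) : assocNA y x z = -assocNA x y z := by
  have h : assocNA (x + y) (x + y) z - assocNA x x z - assocNA y y z
      = assocNA x y z + assocNA y x z := by
    simp only [assocNA, add_mul, mul_add]
    abel
  rw [hA.assocNA_self_left, hA.assocNA_self_left, hA.assocNA_self_left] at h
  linear_combination (norm := abel) -h

theorem assocNA_swap_right (x y z : A) : assocNA x z y = -assocNA x y z := by
  have h : assocNA x (y + z) (y + z) - assocNA x y y - assocNA x z z
      = assocNA x y z + assocNA x z y := by
    simp only [assocNA, add_mul, mul_add]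
    abel
  rw [hA.assocNA_self_right, hA.assocNA_self_right, hA.assocNA_self_right] at h
  linear_combination (norm := abel) -h

theorem flexible (x y : A) : (x * y) * x = x * (y * x) := by
  have h : assocNA x y x = 0 := by rw [hA.assocNA_swap_right, hA.assocNA_self_left, neg_zero]
  exact sub_eq_zero.mp h

theorem assocNA_mul_self_left (x a b : A) :
    assocNA (x * a) x b = x * assocNA x a b - assocNA (x * x) a b := by
  linear_combination (norm := abel) assocNA_teichmuller x x a b
    + hA.assocNA_swap_left (x * a) x b - hA.assocNA_self_left x (a * b)
    + (by rw [hA.assocNA_self_left, zero_mul] : assocNA x x a * b = 0)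

theorem assocNA_mul_self_right (x a b : A) :
    assocNA (b * x) x a = x * assocNA x a b := by
  linear_combination (norm := abel) assocNA_teichmuller b x x a
    + hA.assocNA_swap_left (x * x) b a - hA.assocNA_swap_right (x * x) a b
    - hA.assocNA_swap_left x b (x * a) + hA.assocNA_swap_right x (x * a) b
    - hA.assocNA_swap_left (x * a) x b
    + hA.assocNA_mul_self_left x a b
    + (by rw [hA.assocNA_self_left, mul_zero] : b * assocNA x x a = 0)
    + (by rw [hA.assocNA_self_right, zero_mul] : assocNA b x x * a = 0)

theorem left_moufang (x a b : A) : ((x * a) * x) * b = x * (a * (x * b)) := by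
  have hx : x * assocNA x b a = -(x * assocNA x a b) := by rw [hA.assocNA_swap_right, mul_neg]
  have key : assocNA (x * a) x b + assocNA x a (x * b) = 0 := by
    linear_combination (norm := abel) hA.assocNA_mul_self_left x a b
      + hA.assocNA_swap_right x (x * b) a - hA.assocNA_swap_left (x * b) x a
      + hA.assocNA_mul_self_left x b a + hx - hA.assocNA_swap_right (x * x) a b
  simp only [assocNA] at key
  linear_combination (norm := abel) key

theorem middle_moufang (x y z : A) : (x * y) * (z * x) = x * ((y * z) * x) := by
  have hx : x * assocNA y z x = x * assocNA x y z := by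
    rw [hA.assocNA_swap_right y x z, hA.assocNA_swap_left x y z, neg_neg]
  have key : assocNA x y (z * x) - x * assocNA y z x = 0 := by
    linear_combination (norm := abel) hA.assocNA_swap_right x (z * x) y
      - hA.assocNA_swap_left (z * x) x y + hA.assocNA_mul_self_right x y z - hx
  simp only [assocNA, mul_sub] at key
  linear_combination (norm := abel) key

theorem mul_mul_cancel_left {x y : A} (hxy : x * y = 1) (hyx : y * x = 1) (z : A) :
    y * (x * z) = z := by
  have hyy : x * (y * y) = y := by rw [← hA.right, hxy, one_mul]
  -- `L_x L_{y²} L_x = L_{x y² x} = id`, so `L_x` is invertible.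
  have hbij (t : A) : x * ((y * y) * (x * t)) = t := by
    rw [← hA.left_moufang, hyy, hyx, one_mul]
  have hxyx : x * (y * (x * z)) = x * z := by rw [← hA.left_moufang, hxy, one_mul]
  calc y * (x * z) = x * ((y * y) * (x * (y * (x * z)))) := (hbij _).symm
    _ = z := by rw [hxyx, hbij]

theorem mul_mul_cancel_right {x y : A} (hxy : x * y = 1) (hyx : y * x = 1) (z : A) :
    (z * x) * y = z :=
  MulOpposite.op_injective <| hA.op.mul_mul_cancel_left
    (MulOpposite.unop_injective hyx) (MulOpposite.unop_injective hxy) (MulOpposite.op z)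

theorem mul_mul_rev_eq_one {p p' q q' : A} (hp : p * p' = 1) (hp' : p' * p = 1)
    (hq : q * q' = 1) (hq' : q' * q = 1) : (p * q) * (q' * p') = 1 := by
  have hz : (q' * (p' * p')) * p = q' * p' := by
    rw [← hA.right, hA.mul_mul_cancel_right hp' hp]
  calc (p * q) * (q' * p') = p * ((q * (q' * (p' * p'))) * p) := by
        rw [← hz, hA.middle_moufang]
    _ = 1 := by rw [hA.mul_mul_cancel_left hq' hq, ← hA.left, hp', mul_one, hp]

theorem npowNA_succ' (x : A) (n : ℕ) : npowNA x (n + 1) = npowNA x n * x := by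
  induction n with
  | zero => exact (mul_one x).trans (one_mul x).symm
  | succ n ih => rw [npowNA, ih, ← hA.flexible, ← ih, npowNA]

theorem geomS_mul_one_sub (m : ℕ) (x : A) : geomS m x * (1 - x) = 1 - npowNA x m := by
  rw [geomS, mul_sub, mul_one, Finset.sum_mul, ← Finset.sum_sub_distrib]
  simp only [← hA.npowNA_succ']
  exact Finset.sum_range_sub' (npowNA x) m

end IsAlternative_s12

theorem loop_associator_commutator_general {A : Type*} [NonAssocRing A]
    (altl : ∀ x y : A, x * (x * y) = (x * x) * y)
    (altr : ∀ x y : A, (y * x) * x = y * (x * x))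
    (m : ℕ) (u v w : A)
    (hu : npowNA u m = 0) (hv : npowNA v m = 0) (hw : npowNA w m = 0) :
    ((1 - u) * (1 - v)) * (1 - w) =
      ((1 - u) * ((1 - v) * (1 - w))) *
        (1 - ((geomS m w * geomS m v) * geomS m u) * assocNA u v w) ∧
    (1 - u) * (1 - v) =
      ((1 - v) * (1 - u)) * (1 + (geomS m u * geomS m v) * (u * v - v * u)) := by
  have hA : IsAlternative_s12 A := ⟨altl, altr⟩
  have hS_left {x : A} (hx : npowNA x m = 0) : (1 - x) * geomS m x = 1 := by
    rw [one_sub_mul_geomS, hx, sub_zero]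
  have hS_right {x : A} (hx : npowNA x m = 0) : geomS m x * (1 - x) = 1 := by
    rw [hA.geomS_mul_one_sub, hx, sub_zero]
  have hbc := hA.mul_mul_rev_eq_one (hS_left hv) (hS_right hv) (hS_left hw) (hS_right hw)
  have hcb := hA.mul_mul_rev_eq_one (hS_right hw) (hS_left hw) (hS_right hv) (hS_left hv)
  have habc := hA.mul_mul_rev_eq_one (hS_left hu) (hS_right hu) hbc hcb
  have hcba := hA.mul_mul_rev_eq_one hcb hbc (hS_right hu) (hS_left hu)
  have hba := hA.mul_mul_rev_eq_one (hS_left hv) (hS_right hv) (hS_left hu) (hS_right hu)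
  have hab := hA.mul_mul_rev_eq_one (hS_right hu) (hS_left hu) (hS_right hv) (hS_left hv)
  constructor
  · conv_rhs => rw [mul_sub, mul_one, hA.mul_mul_cancel_left hcba habc,
      sub_eq_add_neg, ← assocNA_one_sub_one_sub_one_sub, assocNA]
    abel
  · conv_rhs => rw [mul_add, mul_one, hA.mul_mul_cancel_left hab hba]
    simp only [mul_sub, sub_mul, mul_one, one_mul]
    abel

/-- **Lemma 7.4.**  Let `A` be a unital alternative ring, `m ≥ 1` and
`u, v, w ∈ A` with `u^m = v^m = w^m = 0`.  With `S(x) = 1 + x + ⋯ + x^(m−1)`,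
`a = 1 − u`, `b = 1 − v`, `c = 1 − w`, we have
`(ab)c = (a(bc))·(1 − ((S(w)S(v))S(u))·(u,v,w))` and
`ab = (ba)·(1 + (S(u)S(v))·(uv − vu))`. -/
theorem loop_associator_commutator {A : Type*} [NonAssocRing A]
    (altl : ∀ x y : A, x * (x * y) = (x * x) * y)
    (altr : ∀ x y : A, (y * x) * x = y * (x * x))
    (m : ℕ) (hm : 1 ≤ m) (u v w : A)
    (hu : npowNA u m = 0) (hv : npowNA v m = 0) (hw : npowNA w m = 0) :
    ((1 - u) * (1 - v)) * (1 - w) =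
      ((1 - u) * ((1 - v) * (1 - w))) *
        (1 - ((geomS m w * geomS m v) * geomS m u) * assocNA u v w) ∧
    (1 - u) * (1 - v) =
      ((1 - v) * (1 - u)) * (1 + (geomS m u * geomS m v) * (u * v - v * u)) :=
  loop_associator_commutator_general altl altr m u v w hu hv hw
end
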